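/- Let b = (b_ij) be a real 2×2 matrix, c1, c2 ≥ 0, and m1, m2 σ-finite measures on ℝ₊² supported by ℝ₊² \ {0} with ∫(z1 ∧ z1² + z2) m1(dz) + ∫(z2 ∧ z2² + z1) m2(dz) < ∞, satisfying b12 + ∫ z2 m1(dz) ≤ 0 and b21 + ∫ z1 m2(dz) ≤ 0. Define φ = (φ1, φ2) by φ1(λ) = b11 λ1 + b12 λ2 + c1 λ1² + ∫(e^{−⟨λ,z⟩} − 1 + ⟨λ,z⟩) m1(dz), φ2(λ) = b21 λ1 + b22 λ2 + c2 λ2² + ∫(e^{−⟨λ,z⟩} − 1 + ⟨λ,z⟩) m2(dz). Let r0 ≤ t, let ξ : [r0, t] → ℝ be measurable and bounded, and let λ, λ' ∈ ℝ₊² with λ1 ≤ λ'1 and λ2 ≤ λ'2. If u, u' : [r0, t] → ℝ₊² are continuous and satisfy u^{(i)}(r) = λ_i − ∫_r^t e^{ξ(s)} φ_i(e^{−ξ(s)} u(s)) ds and u'^{(i)}(r) = λ'_i − ∫_r^t e^{ξ(s)} φ_i(e^{−ξ(s)} u'(s)) ds for i = 1, 2 and all r ∈ [r0, t], then u^{(i)}(r)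 ≤ u'^{(i)}(r) for i = 1, 2 and all r ∈ [r0, t] (monotonicity of the cumulant semigroup in its terminal value). -/

import Mathlib

open MeasureTheory Real

/-!
Both components of the rescaled field `F_i(s, v) = e^{ξ(s)} φ_i(e^{-ξ(s)} v)` are Lipschitz on
bounded boxes of the quadrant (the increments of `e^{-⟨λ,z⟩} - 1 + ⟨λ,z⟩` are dominated by
`min(z₁, z₁²) + z₂`, which the moment condition integrates), and by the admissibility condition
`φ₁` is nonincreasing in `λ₂` and `φ₂` in `λ₁`: the system is quasi-monotone. For such systems
the comparison principle holds. Add the barrier `ε e^{κ(t-r)}` to both coordinates of the gap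
`u' - u`; the result is positive at `r = t`, and at the last time where one of its coordinates is
nonpositive, the one-sided Lipschitz bound makes that coordinate nonincreasing just after it,
a contradiction. Letting `ε → 0` gives `u ≤ u'`.
-/

def quadrant : Set (ℝ × ℝ) := {p | 0 ≤ p.1 ∧ 0 ≤ p.2}

/-- First component of the two-type branching mechanism `φ`. -/
noncomputable def phi1 (b : Matrix (Fin 2) (Fin 2) ℝ) (c1 : ℝ) (m1 : Measure (ℝ × ℝ))
    (l : ℝ × ℝ) : ℝ :=
  b 0 0 * l.1 + b 0 1 * l.2 + c1 * l.1 ^ 2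
    + ∫ z, (Real.exp (-(l.1 * z.1 + l.2 * z.2)) - 1 + (l.1 * z.1 + l.2 * z.2)) ∂m1

/-- Second component of the two-type branching mechanism `φ`. -/
noncomputable def phi2 (b : Matrix (Fin 2) (Fin 2) ℝ) (c2 : ℝ) (m2 : Measure (ℝ × ℝ))
    (l : ℝ × ℝ) : ℝ :=
  b 1 0 * l.1 + b 1 1 * l.2 + c2 * l.2 ^ 2
    + ∫ z, (Real.exp (-(l.1 * z.1 + l.2 * z.2)) - 1 + (l.1 * z.1 + l.2 * z.2)) ∂m2

open Set Filter Topology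
open scoped NNReal

noncomputable def compensatedExp (w : ℝ) : ℝ := exp (-w) - 1 + w

lemma continuous_compensatedExp : Continuous compensatedExp := by
  unfold compensatedExp; fun_prop

@[simp] lemma compensatedExp_zero : compensatedExp 0 = 0 := by
  simp [compensatedExp]

lemma compensatedExp_sub_le_sub {w w' : ℝ} (h : w ≤ w') :
    compensatedExp w' - compensatedExp w ≤ w' - w := by
  have : exp (-w') ≤ exp (-w) := exp_le_exp.2 (neg_le_neg h)
  unfold compensatedExp; linarith

/-- On `[0, W]` the derivative `1 - e^{-w}` of `compensatedExp` lies in `[0, min 1 W]`. -/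
lemma abs_compensatedExp_sub_le {w w' W : ℝ} (hw : 0 ≤ w) (hw' : 0 ≤ w') (hwW : w ≤ W)
    (hw'W : w' ≤ W) :
    |compensatedExp w - compensatedExp w'| ≤ |w - w'| * min 1 W := by
  wlog hle : w ≤ w' generalizing w w'
  · rw [abs_sub_comm, abs_sub_comm w]; exact this hw' hw hw'W hwW (le_of_not_ge hle)
  have hslope : (w' - w) * (1 - exp (-w)) ≤ compensatedExp w' - compensatedExp w ∧
      compensatedExp w' - compensatedExp w ≤ (w' - w) * (1 - exp (-w')) := by
    have h₁ := add_one_le_exp (w - w')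
    have h₂ := add_one_le_exp (w' - w)
    have e₁ : exp (-w) = exp (-w') * exp (w' - w) := by rw [← exp_add]; ring_nf
    have e₂ : exp (-w') = exp (-w) * exp (w - w') := by rw [← exp_add]; ring_nf
    constructor <;> unfold compensatedExp <;>
      nlinarith [exp_pos (-w), exp_pos (-w'), sub_nonneg.2 hle]
  have hexp : 1 - exp (-w') ≤ min 1 W := by
    have := add_one_le_exp (-w')
    exact le_min (by linarith [exp_pos (-w')]) (by linarith)
  have hdiff : 0 ≤ compensatedExp w' - compensatedExp w := by
    refine le_trans ?_ hslope.1
    exact mul_nonneg (sub_nonneg.2 hle) (sub_nonneg.2 (exp_le_one_iff.2 (neg_nonpos.2 hw)))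
  rw [abs_sub_comm, abs_of_nonneg hdiff, abs_sub_comm, abs_of_nonneg (sub_nonneg.2 hle)]
  exact hslope.2.trans (mul_le_mul_of_nonneg_left hexp (sub_nonneg.2 hle))

lemma add_mul_min_one_le {z₁ z₂ K : ℝ} (h₁ : 0 ≤ z₁) (h₂ : 0 ≤ z₂) (hK : 0 ≤ K) :
    (z₁ + z₂) * min 1 (K * (z₁ + z₂)) ≤ (K + 1) * (min z₁ (z₁ ^ 2) + z₂) := by
  have hm₁ : min 1 (K * (z₁ + z₂)) ≤ 1 := min_le_left _ _
  have hm₂ : min 1 (K * (z₁ + z₂)) ≤ K * (z₁ + z₂) := min_le_right _ _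
  have hm₀ : 0 ≤ min 1 (K * (z₁ + z₂)) := le_min zero_le_one (by positivity)
  rcases le_total z₁ 1 with hz | hz
  · rw [min_eq_right (show z₁ ^ 2 ≤ z₁ by nlinarith)]
    nlinarith [mul_le_mul_of_nonneg_left hm₂ h₁, mul_le_mul_of_nonneg_left hm₁ h₂,
      mul_le_mul_of_nonneg_left hz (mul_nonneg hK h₂)]
  · rw [min_eq_left (show z₁ ≤ z₁ ^ 2 by nlinarith)]
    nlinarith [mul_le_mul_of_nonneg_left hm₁ h₁, mul_le_mul_of_nonneg_left hm₁ h₂]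

lemma abs_compensatedExp_pairing_sub_le {K : ℝ} {l l' z : ℝ × ℝ}
    (hl : l ∈ Icc 0 (K, K)) (hl' : l' ∈ Icc 0 (K, K)) (hz : z ∈ quadrant) :
    |compensatedExp (l.1 * z.1 + l.2 * z.2) - compensatedExp (l'.1 * z.1 + l'.2 * z.2)|
      ≤ (K + 1) * dist l l' * (min z.1 (z.1 ^ 2) + z.2) := by
  obtain ⟨⟨hl₁, hl₂⟩, hlK₁, hlK₂⟩ := hl
  obtain ⟨⟨hl'₁, hl'₂⟩, hl'K₁, hl'K₂⟩ := hl'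
  obtain ⟨hz₁, hz₂⟩ := hz
  simp only [Prod.fst_zero, Prod.snd_zero] at *
  have hK : 0 ≤ K := hl₁.trans hlK₁
  have hd₁ : |l.1 - l'.1| ≤ dist l l' := by
    rw [Prod.dist_eq, ← Real.dist_eq]; exact le_max_left _ _
  have hd₂ : |l.2 - l'.2| ≤ dist l l' := by
    rw [Prod.dist_eq, ← Real.dist_eq]; exact le_max_right _ _
  have hdiff : |(l.1 * z.1 + l.2 * z.2) - (l'.1 * z.1 + l'.2 * z.2)|
      ≤ dist l l' * (z.1 + z.2) := by
    calc _ = |(l.1 - l'.1) * z.1 + (l.2 - l'.2) * z.2| := by ring_nf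
      _ ≤ |l.1 - l'.1| * z.1 + |l.2 - l'.2| * z.2 := by
          refine (abs_add_le _ _).trans ?_
          rw [abs_mul, abs_mul, abs_of_nonneg hz₁, abs_of_nonneg hz₂]
      _ ≤ dist l l' * (z.1 + z.2) := by nlinarith
  calc _ ≤ |(l.1 * z.1 + l.2 * z.2) - (l'.1 * z.1 + l'.2 * z.2)| * min 1 (K * (z.1 + z.2)) :=
        abs_compensatedExp_sub_le (by positivity) (by positivity) (by nlinarith) (by nlinarith)
    _ ≤ dist l l' * ((z.1 + z.2) * min 1 (K * (z.1 + z.2))) := by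
        rw [← mul_assoc]
        exact mul_le_mul_of_nonneg_right hdiff (le_min zero_le_one (by positivity))
    _ ≤ dist l l' * ((K + 1) * (min z.1 (z.1 ^ 2) + z.2)) :=
        mul_le_mul_of_nonneg_left (add_mul_min_one_le hz₁ hz₂ hK) dist_nonneg
    _ = _ := by ring

noncomputable def jumpTerm (m : Measure (ℝ × ℝ)) (l : ℝ × ℝ) : ℝ :=
  ∫ z, compensatedExp (l.1 * z.1 + l.2 * z.2) ∂m

section jumpTerm

variable {m : Measure (ℝ × ℝ)} (hm : ∀ᵐ z ∂m, z ∈ quadrant)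
  (hM : Integrable (fun z => min z.1 (z.1 ^ 2) + z.2) m)
include hm hM

lemma integrable_compensatedExp_pairing {l : ℝ × ℝ} (hl : l ∈ quadrant) :
    Integrable (fun z => compensatedExp (l.1 * z.1 + l.2 * z.2)) m := by
  have hl' : l ∈ Icc 0 (l.1 + l.2, l.1 + l.2) :=
    ⟨⟨hl.1, hl.2⟩, by linarith [hl.2], by linarith [hl.1]⟩
  have h0 : (0 : ℝ × ℝ) ∈ Icc 0 (l.1 + l.2, l.1 + l.2) := ⟨le_rfl, hl'.1.trans hl'.2⟩
  refine (hM.const_mul ((l.1 + l.2 + 1) * dist l 0)).mono'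
    (continuous_compensatedExp.comp (by fun_prop)).aestronglyMeasurable ?_
  filter_upwards [hm] with z hz
  simpa [mul_assoc] using abs_compensatedExp_pairing_sub_le hl' h0 hz

lemma abs_jumpTerm_sub_le {K : ℝ} {l l' : ℝ × ℝ} (hl : l ∈ Icc 0 (K, K))
    (hl' : l' ∈ Icc 0 (K, K)) :
    |jumpTerm m l - jumpTerm m l'| ≤ (K + 1) * dist l l' * ∫ z, min z.1 (z.1 ^ 2) + z.2 ∂m := by
  have hq : ∀ {v : ℝ × ℝ}, v ∈ Icc 0 (K, K) → v ∈ quadrant := fun hv => ⟨hv.1.1, hv.1.2⟩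
  rw [jumpTerm, jumpTerm, ← integral_sub (integrable_compensatedExp_pairing hm hM (hq hl))
    (integrable_compensatedExp_pairing hm hM (hq hl')), ← integral_const_mul]
  refine (abs_integral_le_integral_abs).trans (integral_mono_ae ?_ (hM.const_mul _) ?_)
  · exact ((integrable_compensatedExp_pairing hm hM (hq hl)).sub
      (integrable_compensatedExp_pairing hm hM (hq hl'))).abs
  · filter_upwards [hm] with z hz
    exact abs_compensatedExp_pairing_sub_le hl hl' hz

lemma integrable_snd_of_integrable_moment : Integrable (fun z : ℝ × ℝ => z.2) m := by
  refine hM.mono' measurable_snd.aestronglyMeasurable ?_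
  filter_upwards [hm] with z hz
  rw [norm_of_nonneg hz.2]
  linarith [le_min hz.1 (sq_nonneg z.1)]

lemma jumpTerm_sub_le_of_snd_le {x y y' : ℝ} (hx : 0 ≤ x) (hy : 0 ≤ y) (hyy : y ≤ y') :
    jumpTerm m (x, y') - jumpTerm m (x, y) ≤ (y' - y) * ∫ z, z.2 ∂m := by
  rw [jumpTerm, jumpTerm, ← integral_sub
    (integrable_compensatedExp_pairing hm hM (l := (x, y')) ⟨hx, hy.trans hyy⟩)
    (integrable_compensatedExp_pairing hm hM (l := (x, y)) ⟨hx, hy⟩), ← integral_const_mul]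
  refine integral_mono_ae ?_ ((integrable_snd_of_integrable_moment hm hM).const_mul _) ?_
  · exact (integrable_compensatedExp_pairing hm hM (l := (x, y')) ⟨hx, hy.trans hyy⟩).sub
      (integrable_compensatedExp_pairing hm hM (l := (x, y)) ⟨hx, hy⟩)
  · filter_upwards [hm] with z hz
    have := compensatedExp_sub_le_sub (show x * z.1 + y * z.2 ≤ x * z.1 + y' * z.2 by
      nlinarith [hz.2])
    linarith

end jumpTerm

lemma phi1_eq_jumpTerm (b : Matrix (Fin 2) (Fin 2) ℝ) (c : ℝ) (m : Measure (ℝ × ℝ)) (l : ℝ × ℝ) :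
    phi1 b c m l = b 0 0 * l.1 + b 0 1 * l.2 + c * l.1 ^ 2 + jumpTerm m l := rfl

section phi1

variable {b : Matrix (Fin 2) (Fin 2) ℝ} {c : ℝ} {m : Measure (ℝ × ℝ)}
  (hm : ∀ᵐ z ∂m, z ∈ quadrant) (hM : Integrable (fun z => min z.1 (z.1 ^ 2) + z.2) m)
include hm hM

lemma phi1_lipschitzOnWith (K : ℝ) :
    LipschitzOnWith
      (|b 0 0| + |b 0 1| + 2 * |c| * K + (K + 1) * ∫ z, min z.1 (z.1 ^ 2) + z.2 ∂m).toNNReal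
      (phi1 b c m) (Icc 0 (K, K)) := by
  refine LipschitzOnWith.of_dist_le' fun l hl l' hl' => ?_
  have hd₁ : |l.1 - l'.1| ≤ dist l l' := by
    rw [Prod.dist_eq, ← Real.dist_eq]; exact le_max_left _ _
  have hd₂ : |l.2 - l'.2| ≤ dist l l' := by
    rw [Prod.dist_eq, ← Real.dist_eq]; exact le_max_right _ _
  have h₀ : |b 0 0 * (l.1 - l'.1)| ≤ |b 0 0| * dist l l' := by rw [abs_mul]; gcongr
  have h₁ : |b 0 1 * (l.2 - l'.2)| ≤ |b 0 1| * dist l l' := by rw [abs_mul]; gcongr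
  have h₂ : |c * (l.1 ^ 2 - l'.1 ^ 2)| ≤ 2 * |c| * K * dist l l' := by
    have hsum : |l.1 + l'.1| ≤ 2 * K := by
      rw [abs_of_nonneg (add_nonneg hl.1.1 hl'.1.1)]; linarith [hl.2.1, hl'.2.1]
    rw [show l.1 ^ 2 - l'.1 ^ 2 = (l.1 + l'.1) * (l.1 - l'.1) by ring, abs_mul, abs_mul]
    have := mul_le_mul hsum hd₁ (abs_nonneg _) (by linarith [abs_nonneg (l.1 + l'.1)])
    nlinarith [abs_nonneg c]
  have hJ := abs_jumpTerm_sub_le hm hM hl hl'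
  have hsplit : phi1 b c m l - phi1 b c m l' = b 0 0 * (l.1 - l'.1) + b 0 1 * (l.2 - l'.2)
      + c * (l.1 ^ 2 - l'.1 ^ 2) + (jumpTerm m l - jumpTerm m l') := by
    simp only [phi1_eq_jumpTerm]; ring
  rw [Real.dist_eq, hsplit, abs_le]
  constructor <;>
    nlinarith [abs_le.1 h₀, abs_le.1 h₁, abs_le.1 h₂, abs_le.1 hJ]

lemma phi1_le_of_snd_le (hadm : b 0 1 + ∫ z, z.2 ∂m ≤ 0) {x y y' : ℝ} (hx : 0 ≤ x) (hy : 0 ≤ y)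
    (hyy : y ≤ y') : phi1 b c m (x, y') ≤ phi1 b c m (x, y) := by
  have hJ := jumpTerm_sub_le_of_snd_le hm hM hx hy hyy
  have := mul_nonpos_of_nonneg_of_nonpos (sub_nonneg.2 hyy) hadm
  simp only [phi1_eq_jumpTerm]
  nlinarith

end phi1

/-- For a function Lipschitz in `v` and nonincreasing in `v.2`, this is what bounds
`f v' - f v`: the second coordinate only counts where `v'.2` falls below `v.2`. -/
noncomputable def oneSidedDist (v v' : ℝ × ℝ) : ℝ := |v'.1 - v.1| + max (v.2 - v'.2) 0

lemma sub_le_mul_oneSidedDist {f : ℝ × ℝ → ℝ} {L : ℝ≥0} {p q v v' : ℝ × ℝ}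
    (hf : LipschitzOnWith L f (Icc p q))
    (hanti : ∀ x y y', (x, y) ∈ Icc p q → (x, y') ∈ Icc p q → y ≤ y' → f (x, y') ≤ f (x, y))
    (hv : v ∈ Icc p q) (hv' : v' ∈ Icc p q) : f v' - f v ≤ L * oneSidedDist v v' := by
  have hw : (v'.1, v.2) ∈ Icc p q := ⟨⟨hv'.1.1, hv.1.2⟩, hv'.2.1, hv.2.2⟩
  have hfst : f (v'.1, v.2) - f v ≤ L * |v'.1 - v.1| := by
    refine (le_abs_self _).trans ?_
    rw [← Real.dist_eq]
    refine (hf.dist_le_mul _ hw _ hv).trans_eq ?_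
    simp [Prod.dist_eq, Real.dist_eq]
  have hsnd : f v' - f (v'.1, v.2) ≤ L * max (v.2 - v'.2) 0 := by
    rcases le_total v.2 v'.2 with h | h
    · have := hanti v'.1 v.2 v'.2 hw hv' h
      nlinarith [le_max_right (v.2 - v'.2) 0, L.coe_nonneg]
    · refine (le_abs_self _).trans ?_
      rw [← Real.dist_eq, max_eq_left (sub_nonneg.2 h)]
      refine (hf.dist_le_mul _ hv' _ hw).trans_eq ?_
      simp [Prod.dist_eq, Real.dist_eq, abs_of_nonpos (sub_nonpos.2 h), h]
  rw [oneSidedDist, mul_add]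
  linarith

noncomputable def rescaled (f : ℝ × ℝ → ℝ) (ξ : ℝ → ℝ) (u : ℝ → ℝ × ℝ) (s : ℝ) : ℝ :=
  exp (ξ s) * f (exp (-ξ s) • u s)

lemma oneSidedDist_smul {e : ℝ} (he : 0 ≤ e) (v v' : ℝ × ℝ) :
    oneSidedDist (e • v) (e • v') = e * oneSidedDist v v' := by
  simp only [oneSidedDist, Prod.smul_fst, Prod.smul_snd, smul_eq_mul, ← mul_sub, abs_mul,
    abs_of_nonneg he, mul_add, mul_max_of_nonneg _ _ he, mul_zero]

lemma rescaled_sub_le {f : ℝ × ℝ → ℝ} {L : ℝ} {ξ : ℝ → ℝ} {u u' : ℝ → ℝ × ℝ} {s : ℝ}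
    (h : f (exp (-ξ s) • u' s) - f (exp (-ξ s) • u s)
      ≤ L * oneSidedDist (exp (-ξ s) • u s) (exp (-ξ s) • u' s)) :
    rescaled f ξ u' s - rescaled f ξ u s ≤ L * oneSidedDist (u s) (u' s) := by
  rw [oneSidedDist_smul (exp_pos _).le] at h
  calc rescaled f ξ u' s - rescaled f ξ u s
      = exp (ξ s) * (f (exp (-ξ s) • u' s) - f (exp (-ξ s) • u s)) := by
        rw [rescaled, rescaled, mul_sub]
    _ ≤ exp (ξ s) * (L * (exp (-ξ s) * oneSidedDist (u s) (u' s))) :=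
        mul_le_mul_of_nonneg_left h (exp_pos _).le
    _ = L * oneSidedDist (u s) (u' s) := by
        rw [exp_neg]; field_simp

lemma integrableOn_rescaled {f : ℝ × ℝ → ℝ} {L : ℝ≥0} {S : Set (ℝ × ℝ)} (hS : IsCompact S)
    (hf : LipschitzOnWith L f S) {ξ : ℝ → ℝ} (hξ : Measurable ξ) {a t C : ℝ}
    (hξC : ∀ s ∈ Icc a t, |ξ s| ≤ C) {u : ℝ → ℝ × ℝ} (hu : ContinuousOn u (Icc a t))
    (hmem : ∀ s ∈ Icc a t, exp (-ξ s) • u s ∈ S) :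
    IntegrableOn (rescaled f ξ u) (Icc a t) := by
  obtain ⟨g, hg, hfg⟩ := hf.extend_real
  obtain ⟨B, hB⟩ := hS.exists_bound_of_continuousOn hf.continuousOn
  have heq : ∀ᵐ s ∂volume.restrict (Icc a t), rescaled g ξ u s = rescaled f ξ u s :=
    ae_restrict_of_forall_mem measurableSet_Icc fun s hs => by
      rw [rescaled, rescaled, hfg (hmem s hs)]
  refine Integrable.of_bound (AEStronglyMeasurable.congr ?_ heq) (exp C * B)
    (ae_restrict_of_forall_mem measurableSet_Icc fun s hs => ?_)
  · exact hξ.exp.aestronglyMeasurable.mul (hg.continuous.comp_aestronglyMeasurable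
      (hξ.neg.exp.aestronglyMeasurable.smul (hu.aestronglyMeasurable measurableSet_Icc)))
  · rw [rescaled, norm_mul, norm_of_nonneg (exp_pos _).le]
    exact mul_le_mul (exp_le_exp.2 (le_of_abs_le (hξC s hs))) (hB _ (hmem s hs))
      (norm_nonneg _) (exp_pos _).le

lemma eventually_smul_mem_Icc {a t C : ℝ} {ξ : ℝ → ℝ} (hξC : ∀ s ∈ Icc a t, |ξ s| ≤ C)
    {u : ℝ → ℝ × ℝ} (hu : ContinuousOn u (Icc a t)) (huq : ∀ s ∈ Icc a t, u s ∈ quadrant) :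
    ∀ᶠ K in atTop, ∀ s ∈ Icc a t, exp (-ξ s) • u s ∈ Icc 0 (K, K) := by
  obtain ⟨B, hB⟩ := isCompact_Icc.exists_bound_of_continuousOn hu
  refine eventually_atTop.2 ⟨exp C * B, fun K hK s hs => ?_⟩
  have he : exp (-ξ s) ≤ exp C := exp_le_exp.2 ((neg_le_abs _).trans (hξC s hs))
  have hcoord : ∀ x : ℝ, 0 ≤ x → ‖x‖ ≤ ‖u s‖ → exp (-ξ s) * x ≤ K := fun x hx hxu =>
    (mul_le_mul he ((Real.le_norm_self x).trans (hxu.trans (hB s hs))) hx (exp_pos _).le).trans hK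
  exact ⟨⟨mul_nonneg (exp_pos _).le (huq s hs).1, mul_nonneg (exp_pos _).le (huq s hs).2⟩,
    hcoord _ (huq s hs).1 (norm_fst_le _), hcoord _ (huq s hs).2 (norm_snd_le _)⟩

lemma integrable_moment_of_lintegral {m : Measure (ℝ × ℝ)} (hm : ∀ᵐ z ∂m, z ∈ quadrant)
    (hmom : ∫⁻ z, ENNReal.ofReal (min z.1 (z.1 ^ 2) + z.2) ∂m < ⊤) :
    Integrable (fun z => min z.1 (z.1 ^ 2) + z.2) m := by
  refine ⟨by fun_prop, (hasFiniteIntegral_iff_ofReal ?_).2 hmom⟩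
  filter_upwards [hm] with z hz
  exact add_nonneg (le_min hz.1 (sq_nonneg _)) hz.2

theorem phi1_rescaled_estimates {b : Matrix (Fin 2) (Fin 2) ℝ} {c : ℝ} {m : Measure (ℝ × ℝ)}
    (hsupp : m quadrantᶜ = 0) (hmom : ∫⁻ z, ENNReal.ofReal (min z.1 (z.1 ^ 2) + z.2) ∂m < ⊤)
    (hadm : b 0 1 + ∫ z, z.2 ∂m ≤ 0) {a t : ℝ} {ξ : ℝ → ℝ} (hξ : Measurable ξ)
    (hξC : ∃ C, ∀ s ∈ Icc a t, |ξ s| ≤ C) {u u' : ℝ → ℝ × ℝ}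
    (hu : ContinuousOn u (Icc a t)) (hu' : ContinuousOn u' (Icc a t))
    (huq : ∀ s ∈ Icc a t, u s ∈ quadrant) (hu'q : ∀ s ∈ Icc a t, u' s ∈ quadrant) :
    ∃ L : ℝ≥0, IntegrableOn (rescaled (phi1 b c m) ξ u) (Icc a t) ∧
      IntegrableOn (rescaled (phi1 b c m) ξ u') (Icc a t) ∧
      ∀ s ∈ Icc a t, rescaled (phi1 b c m) ξ u' s - rescaled (phi1 b c m) ξ u s
        ≤ L * oneSidedDist (u s) (u' s) := by
  obtain ⟨C, hC⟩ := hξC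
  have hm : ∀ᵐ z ∂m, z ∈ quadrant := mem_ae_iff.2 hsupp
  have hM := integrable_moment_of_lintegral hm hmom
  obtain ⟨K, hmem, hmem'⟩ :=
    ((eventually_smul_mem_Icc hC hu huq).and (eventually_smul_mem_Icc hC hu' hu'q)).exists
  obtain ⟨L, hLip⟩ : ∃ L, LipschitzOnWith L (phi1 b c m) (Icc 0 (K, K)) :=
    ⟨_, phi1_lipschitzOnWith hm hM K⟩
  refine ⟨L, integrableOn_rescaled isCompact_Icc hLip hξ hC hu hmem,
    integrableOn_rescaled isCompact_Icc hLip hξ hC hu' hmem', fun s hs => rescaled_sub_le ?_⟩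
  refine sub_le_mul_oneSidedDist hLip (fun x y y' hxy _ hyy => ?_) (hmem s hs) (hmem' s hs)
  exact phi1_le_of_snd_le hm hM hadm hxy.1.1 hxy.1.2 hyy

lemma phi2_eq_phi1_swap (b : Matrix (Fin 2) (Fin 2) ℝ) (c : ℝ) (m : Measure (ℝ × ℝ))
    (l : ℝ × ℝ) :
    phi2 b c m l
      = phi1 (b.submatrix (Equiv.swap 0 1) (Equiv.swap 0 1)) c (m.map Prod.swap) l.swap := by
  rw [phi1, phi2, integral_map measurable_swap.aemeasurable (by fun_prop)]
  simp only [Matrix.submatrix_apply, Equiv.swap_apply_left, Equiv.swap_apply_right,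
    Prod.fst_swap, Prod.snd_swap]
  ring_nf

theorem phi2_rescaled_estimates {b : Matrix (Fin 2) (Fin 2) ℝ} {c : ℝ} {m : Measure (ℝ × ℝ)}
    (hsupp : m quadrantᶜ = 0) (hmom : ∫⁻ z, ENNReal.ofReal (min z.2 (z.2 ^ 2) + z.1) ∂m < ⊤)
    (hadm : b 1 0 + ∫ z, z.1 ∂m ≤ 0) {a t : ℝ} {ξ : ℝ → ℝ} (hξ : Measurable ξ)
    (hξC : ∃ C, ∀ s ∈ Icc a t, |ξ s| ≤ C) {u u' : ℝ → ℝ × ℝ}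
    (hu : ContinuousOn u (Icc a t)) (hu' : ContinuousOn u' (Icc a t))
    (huq : ∀ s ∈ Icc a t, u s ∈ quadrant) (hu'q : ∀ s ∈ Icc a t, u' s ∈ quadrant) :
    ∃ L : ℝ≥0, IntegrableOn (rescaled (phi2 b c m) ξ u) (Icc a t) ∧
      IntegrableOn (rescaled (phi2 b c m) ξ u') (Icc a t) ∧
      ∀ s ∈ Icc a t, rescaled (phi2 b c m) ξ u' s - rescaled (phi2 b c m) ξ u s
        ≤ L * oneSidedDist (u s).swap (u' s).swap := by
  have hswap : ∀ v : ℝ → ℝ × ℝ, rescaled (phi2 b c m) ξ v = rescaled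
      (phi1 (b.submatrix (Equiv.swap 0 1) (Equiv.swap 0 1)) c (m.map Prod.swap)) ξ
      (Prod.swap ∘ v) := fun v => by
    ext s; simp only [rescaled, phi2_eq_phi1_swap, Prod.smul_swap, Function.comp_apply]
  have hquad : ∀ {v : ℝ × ℝ}, v ∈ quadrant → v.swap ∈ quadrant := fun hv => ⟨hv.2, hv.1⟩
  rw [hswap, hswap]
  refine phi1_rescaled_estimates ?_ ?_ ?_ hξ hξC (continuous_swap.comp_continuousOn hu)
    (continuous_swap.comp_continuousOn hu') (fun s hs => hquad (huq s hs))
    (fun s hs => hquad (hu'q s hs))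
  · refine (MeasurableEquiv.prodComm.map_apply quadrantᶜ).trans (Eq.trans ?_ hsupp)
    congr 1; ext z
    exact not_congr and_comm
  · exact (lintegral_map_equiv _ MeasurableEquiv.prodComm).trans_lt hmom
  · have : ∫ z, z.2 ∂m.map Prod.swap = ∫ z, z.1 ∂m :=
      integral_map_equiv MeasurableEquiv.prodComm (fun z : ℝ × ℝ => z.2)
    simpa [this] using hadm

lemma pos_of_barrier {ι : Type*} [Finite ι] {a t ε : ℝ} (hε : 0 < ε) {g : ι → ℝ → ℝ}
    (hg : ∀ i, ContinuousOn (g i) (Icc a t)) (ht : ∀ i, 0 < g i t)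
    (hdec : ∀ i, ∀ r ∈ Icc a t, ∀ s ∈ Icc a t, r ≤ s →
      (∀ x ∈ Ioo r s, (∀ j, 0 ≤ g j x) ∧ g i x ≤ ε) → g i s ≤ g i r) :
    ∀ r ∈ Icc a t, ∀ i, 0 < g i r := by
  by_contra! hbad
  obtain ⟨r, hr, i, hi⟩ := hbad
  set S := ⋃ j, Icc a t ∩ g j ⁻¹' Iic 0
  have hSsub : S ⊆ Icc a t := iUnion_subset fun j => inter_subset_left
  have hSbdd : BddAbove S := bddAbove_Icc.mono hSsub
  have hcS : sSup S ∈ S :=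
    (isClosed_iUnion_of_finite fun j => (hg j).preimage_isClosed_of_isClosed isClosed_Icc
      isClosed_Iic).csSup_mem ⟨r, mem_iUnion.2 ⟨i, hr, hi⟩⟩ hSbdd
  set c := sSup S
  obtain ⟨k, hc, hk⟩ := mem_iUnion.1 hcS
  -- `c` is the last time at which some `g j` is nonpositive
  have hafter : ∀ x ∈ Ioc c t, ∀ j, 0 < g j x := fun x hx j => by
    by_contra! hj
    have := le_csSup hSbdd (mem_iUnion.2 ⟨j, ⟨hc.1.trans hx.1.le, hx.2⟩, hj⟩)
    exact hx.1.not_ge this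
  have hct : c < t := hc.2.lt_of_ne fun h => (ht k).not_ge (h ▸ hk)
  have hsmall : ∀ᶠ x in 𝓝[>] c, g k x < ε := by
    rw [← nhdsWithin_Ioc_eq_nhdsGT hct]
    exact ((hg k c hc).mono fun x hx => ⟨hc.1.trans hx.1.le, hx.2⟩).eventually
      (eventually_lt_nhds (hk.trans_lt hε))
  obtain ⟨d₀, hd₀, hd₀small⟩ := mem_nhdsGT_iff_exists_Ioo_subset.1 hsmall
  have hcd : c < min d₀ t := lt_min hd₀ hct
  have hd : min d₀ t ∈ Ioc c t := ⟨hcd, min_le_right _ _⟩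
  have hstuck := hdec k c hc (min d₀ t) ⟨hc.1.trans hcd.le, hd.2⟩ hcd.le fun x hx =>
    ⟨fun j => (hafter x ⟨hx.1, hx.2.le.trans hd.2⟩ j).le,
      (hd₀small ⟨hx.1, hx.2.trans_le (min_le_left _ _)⟩).le⟩
  have hk' : g k c ≤ 0 := hk
  linarith [hafter _ hd k]

lemma integral_mul_exp_mul_sub (κ t r s : ℝ) :
    ∫ x in r..s, κ * exp (κ * (t - x)) = exp (κ * (t - r)) - exp (κ * (t - s)) := by
  have hderiv : ∀ x, HasDerivAt (fun x => -exp (κ * (t - x))) (κ * exp (κ * (t - x))) x :=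
    fun x => (((hasDerivAt_id' x).const_sub t).const_mul κ).exp.fun_neg.congr_deriv (by ring)
  rw [intervalIntegral.integral_eq_sub_of_hasDerivAt (fun x _ => hderiv x)
    ((by fun_prop : Continuous fun x => κ * exp (κ * (t - x))).intervalIntegrable _ _)]
  ring

lemma sub_eq_integral_of_eq_sub_integral {a t lam : ℝ} {x F : ℝ → ℝ}
    (hF : IntegrableOn F (Icc a t)) (hx : ∀ r ∈ Icc a t, x r = lam - ∫ s in r..t, F s)
    {r s : ℝ} (hr : r ∈ Icc a t) (hs : s ∈ Icc a t) : x s - x r = ∫ σ in r..s, F σ := by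
  have hint : ∀ {p q}, p ∈ Icc a t → q ∈ Icc a t → IntervalIntegrable F volume p q :=
    fun hp hq => (hF.mono_set (uIcc_subset_Icc hp hq)).intervalIntegrable
  rw [hx s hs, hx r hr, ← intervalIntegral.integral_add_adjacent_intervals (hint hr hs)
    (hint hs ⟨hr.1.trans hr.2, le_rfl⟩)]
  ring

lemma oneSidedDist_le_two_mul {v v' : ℝ × ℝ} {ε w : ℝ} (hεw : ε ≤ w)
    (h₁ : 0 ≤ v'.1 - v.1 + w) (h₂ : 0 ≤ v'.2 - v.2 + w) (h₃ : v'.1 - v.1 + w ≤ ε) :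
    oneSidedDist v v' ≤ 2 * w := by
  have habs : |v'.1 - v.1| ≤ w := abs_le.2 ⟨by linarith, by linarith⟩
  have hmax : max (v.2 - v'.2) 0 ≤ w := max_le (by linarith) (by linarith)
  rw [oneSidedDist]; linarith

lemma barrier_step {a t L κ ε : ℝ} {lam lam' : ℝ × ℝ} (hL : 0 ≤ L) (hκ : 2 * L ≤ κ) (hε : 0 ≤ ε)
    {u u' : ℝ → ℝ × ℝ} {F F' : ℝ → ℝ}
    (hF : IntegrableOn F (Icc a t)) (hF' : IntegrableOn F' (Icc a t))
    (hu : ∀ r ∈ Icc a t, (u r).1 = lam.1 - ∫ s in r..t, F s)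
    (hu' : ∀ r ∈ Icc a t, (u' r).1 = lam'.1 - ∫ s in r..t, F' s)
    (hFF : ∀ s ∈ Icc a t, F' s - F s ≤ L * oneSidedDist (u s) (u' s))
    {r s : ℝ} (hr : r ∈ Icc a t) (hs : s ∈ Icc a t) (hrs : r ≤ s)
    (hsmall : ∀ σ ∈ Ioo r s, 0 ≤ (u' σ).1 - (u σ).1 + ε * exp (κ * (t - σ)) ∧
      0 ≤ (u' σ).2 - (u σ).2 + ε * exp (κ * (t - σ)) ∧
      (u' σ).1 - (u σ).1 + ε * exp (κ * (t - σ)) ≤ ε) :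
    (u' s).1 - (u s).1 + ε * exp (κ * (t - s)) ≤ (u' r).1 - (u r).1 + ε * exp (κ * (t - r)) := by
  have hint : ∀ {G : ℝ → ℝ}, IntegrableOn G (Icc a t) → IntervalIntegrable G volume r s :=
    fun hG => (hG.mono_set (uIcc_subset_Icc hr hs)).intervalIntegrable
  have hκ0 : 0 ≤ κ := by linarith
  have hbound : ∫ σ in r..s, (F' σ - F σ) ≤ ∫ σ in r..s, ε * (κ * exp (κ * (t - σ))) := by
    refine intervalIntegral.integral_mono_on_of_le_Ioo hrs ((hint hF').sub (hint hF))
      ((by fun_prop : Continuous fun σ => ε * (κ * exp (κ * (t - σ)))).intervalIntegrable _ _)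
      fun σ hσ => ?_
    obtain ⟨h₁, h₂, h₃⟩ := hsmall σ hσ
    have hE : ε ≤ ε * exp (κ * (t - σ)) :=
      le_mul_of_one_le_right hε (one_le_exp (mul_nonneg hκ0 (sub_nonneg.2 (hσ.2.le.trans hs.2))))
    have hdist := mul_le_mul_of_nonneg_left (oneSidedDist_le_two_mul hE h₁ h₂ h₃) hL
    have := hFF σ ⟨hr.1.trans hσ.1.le, hσ.2.le.trans hs.2⟩
    have := mul_le_mul_of_nonneg_right hκ (hε.trans hE)
    linarith
  rw [intervalIntegral.integral_sub (hint hF') (hint hF), intervalIntegral.integral_const_mul,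
    integral_mul_exp_mul_sub,
    ← sub_eq_integral_of_eq_sub_integral (x := fun r => (u r).1) hF hu hr hs,
    ← sub_eq_integral_of_eq_sub_integral (x := fun r => (u' r).1) hF' hu' hr hs] at hbound
  linarith

theorem le_of_integral_eq_of_oneSidedDist {a t : ℝ} (hat : a ≤ t) {L₁ L₂ : ℝ≥0}
    {lam lam' : ℝ × ℝ} (hle₁ : lam.1 ≤ lam'.1) (hle₂ : lam.2 ≤ lam'.2)
    {u u' : ℝ → ℝ × ℝ} {F₁ F₂ F₁' F₂' : ℝ → ℝ}
    (hu : ContinuousOn u (Icc a t)) (hu' : ContinuousOn u' (Icc a t))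
    (hF₁ : IntegrableOn F₁ (Icc a t)) (hF₁' : IntegrableOn F₁' (Icc a t))
    (hF₂ : IntegrableOn F₂ (Icc a t)) (hF₂' : IntegrableOn F₂' (Icc a t))
    (hu₁ : ∀ r ∈ Icc a t, (u r).1 = lam.1 - ∫ s in r..t, F₁ s)
    (hu₂ : ∀ r ∈ Icc a t, (u r).2 = lam.2 - ∫ s in r..t, F₂ s)
    (hu'₁ : ∀ r ∈ Icc a t, (u' r).1 = lam'.1 - ∫ s in r..t, F₁' s)
    (hu'₂ : ∀ r ∈ Icc a t, (u' r).2 = lam'.2 - ∫ s in r..t, F₂' s)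
    (hest₁ : ∀ s ∈ Icc a t, F₁' s - F₁ s ≤ L₁ * oneSidedDist (u s) (u' s))
    (hest₂ : ∀ s ∈ Icc a t, F₂' s - F₂ s ≤ L₂ * oneSidedDist (u s).swap (u' s).swap) :
    ∀ r ∈ Icc a t, (u r).1 ≤ (u' r).1 ∧ (u r).2 ≤ (u' r).2 := by
  -- the decay rate `κ` of the barrier `ε e^{κ(t-r)}` dominates both one-sided Lipschitz bounds
  set κ : ℝ := 2 * (L₁ + L₂)
  have hκ₁ : 2 * (L₁ : ℝ) ≤ κ := by simp only [κ]; linarith [L₂.coe_nonneg]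
  have hκ₂ : 2 * (L₂ : ℝ) ≤ κ := by simp only [κ]; linarith [L₁.coe_nonneg]
  have ht : t ∈ Icc a t := ⟨hat, le_rfl⟩
  have hpos : ∀ ε > 0, ∀ r ∈ Icc a t, ∀ i : Fin 2,
      0 < ![(u' r).1 - (u r).1, (u' r).2 - (u r).2] i + ε * exp (κ * (t - r)) := by
    intro ε hε
    refine pos_of_barrier hε (fun i => ?_) (fun i => ?_) (fun i r hr s hs hrs hsmall => ?_)
    · have hw : ContinuousOn (fun x => ε * exp (κ * (t - x))) (Icc a t) := by fun_prop
      fin_cases i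
      · exact ((continuous_fst.comp_continuousOn hu').sub
          (continuous_fst.comp_continuousOn hu)).add hw
      · exact ((continuous_snd.comp_continuousOn hu').sub
          (continuous_snd.comp_continuousOn hu)).add hw
    · fin_cases i
      · simpa [hu₁ t ht, hu'₁ t ht] using add_pos_of_nonneg_of_pos (sub_nonneg.2 hle₁) hε
      · simpa [hu₂ t ht, hu'₂ t ht] using add_pos_of_nonneg_of_pos (sub_nonneg.2 hle₂) hε
    · simp only [Fin.forall_fin_two] at hsmall
      fin_cases i
      · exact barrier_step L₁.coe_nonneg hκ₁ hε.le hF₁ hF₁' hu₁ hu'₁ hest₁ hr hs hrs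
          fun σ hσ => ⟨(hsmall σ hσ).1.1, (hsmall σ hσ).1.2, (hsmall σ hσ).2⟩
      · exact barrier_step (lam := lam.swap) (lam' := lam'.swap) (u := fun x => (u x).swap)
          (u' := fun x => (u' x).swap)
          L₂.coe_nonneg hκ₂ hε.le hF₂ hF₂' hu₂ hu'₂ hest₂ hr hs hrs
          fun σ hσ => ⟨(hsmall σ hσ).1.2, (hsmall σ hσ).1.1, (hsmall σ hσ).2⟩
  intro r hr
  have hE := exp_pos (κ * (t - r))
  have hlim : ∀ i : Fin 2, 0 ≤ ![(u' r).1 - (u r).1, (u' r).2 - (u r).2] i := fun i =>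
    le_of_forall_pos_lt_add fun δ hδ => by
      simpa [div_mul_cancel₀ _ hE.ne'] using hpos (δ / exp (κ * (t - r))) (by positivity) r hr i
  exact ⟨sub_nonneg.1 (hlim 0), sub_nonneg.1 (hlim 1)⟩

theorem stmt15_general (b : Matrix (Fin 2) (Fin 2) ℝ) (c1 c2 : ℝ)
    (m1 m2 : Measure (ℝ × ℝ))
    (hsupp1 : m1 quadrantᶜ = 0)
    (hsupp2 : m2 quadrantᶜ = 0)
    (hmom1 : ∫⁻ z, ENNReal.ofReal (min z.1 (z.1 ^ 2) + z.2) ∂m1 < ⊤)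
    (hmom2 : ∫⁻ z, ENNReal.ofReal (min z.2 (z.2 ^ 2) + z.1) ∂m2 < ⊤)
    (hadm1 : b 0 1 + ∫ z, z.2 ∂m1 ≤ 0)
    (hadm2 : b 1 0 + ∫ z, z.1 ∂m2 ≤ 0)
    (t r0 : ℝ) (hr0 : r0 ≤ t)
    (ξ : ℝ → ℝ) (hξmeas : Measurable ξ)
    (hξbdd : ∃ C : ℝ, ∀ s ∈ Set.Icc r0 t, |ξ s| ≤ C)
    (lam lam' : ℝ × ℝ)
    (hle1 : lam.1 ≤ lam'.1) (hle2 : lam.2 ≤ lam'.2)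
    (u u' : ℝ → ℝ × ℝ)
    (hucont : ContinuousOn u (Set.Icc r0 t))
    (hu'cont : ContinuousOn u' (Set.Icc r0 t))
    (huquad : ∀ r ∈ Set.Icc r0 t, u r ∈ quadrant)
    (hu'quad : ∀ r ∈ Set.Icc r0 t, u' r ∈ quadrant)
    (hueq1 : ∀ r ∈ Set.Icc r0 t,
      (u r).1 = lam.1 - ∫ s in r..t,
        Real.exp (ξ s) * phi1 b c1 m1 (Real.exp (-ξ s) • u s))
    (hueq2 : ∀ r ∈ Set.Icc r0 t,
      (u r).2 = lam.2 - ∫ s in r..t,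
        Real.exp (ξ s) * phi2 b c2 m2 (Real.exp (-ξ s) • u s))
    (hu'eq1 : ∀ r ∈ Set.Icc r0 t,
      (u' r).1 = lam'.1 - ∫ s in r..t,
        Real.exp (ξ s) * phi1 b c1 m1 (Real.exp (-ξ s) • u' s))
    (hu'eq2 : ∀ r ∈ Set.Icc r0 t,
      (u' r).2 = lam'.2 - ∫ s in r..t,
        Real.exp (ξ s) * phi2 b c2 m2 (Real.exp (-ξ s) • u' s)) :
    ∀ r ∈ Set.Icc r0 t, (u r).1 ≤ (u' r).1 ∧ (u r).2 ≤ (u' r).2 := by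
  obtain ⟨L₁, hF₁, hF₁', hest₁⟩ := phi1_rescaled_estimates (c := c1) hsupp1 hmom1 hadm1 hξmeas
    hξbdd hucont hu'cont huquad hu'quad
  obtain ⟨L₂, hF₂, hF₂', hest₂⟩ := phi2_rescaled_estimates (c := c2) hsupp2 hmom2 hadm2 hξmeas
    hξbdd hucont hu'cont huquad hu'quad
  exact le_of_integral_eq_of_oneSidedDist hr0 hle1 hle2 hucont hu'cont hF₁ hF₁' hF₂ hF₂'
    hueq1 hueq2 hu'eq1 hu'eq2 hest₁ hest₂

/-- Monotonicity of the cumulant semigroup in its terminal value: if `λ ≤ λ'`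
componentwise, then the corresponding continuous quadrant-valued solutions `u` and `u'`
of the backward equation `u⁽ⁱ⁾(r) = λ_i − ∫_r^t e^{ξ(s)} φ_i(e^{−ξ(s)} u(s)) ds`
satisfy `u⁽ⁱ⁾(r) ≤ u'⁽ⁱ⁾(r)` for `i = 1, 2` and all `r ∈ [r0, t]`. -/
theorem stmt15 (b : Matrix (Fin 2) (Fin 2) ℝ) (c1 c2 : ℝ) (hc1 : 0 ≤ c1) (hc2 : 0 ≤ c2)
    (m1 m2 : Measure (ℝ × ℝ)) [SigmaFinite m1] [SigmaFinite m2]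
    (hsupp1 : m1 quadrantᶜ = 0) (hzero1 : m1 {0} = 0)
    (hsupp2 : m2 quadrantᶜ = 0) (hzero2 : m2 {0} = 0)
    (hmom1 : ∫⁻ z, ENNReal.ofReal (min z.1 (z.1 ^ 2) + z.2) ∂m1 < ⊤)
    (hmom2 : ∫⁻ z, ENNReal.ofReal (min z.2 (z.2 ^ 2) + z.1) ∂m2 < ⊤)
    (hadm1 : b 0 1 + ∫ z, z.2 ∂m1 ≤ 0)
    (hadm2 : b 1 0 + ∫ z, z.1 ∂m2 ≤ 0)
    (t r0 : ℝ) (hr0 : r0 ≤ t)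
    (ξ : ℝ → ℝ) (hξmeas : Measurable ξ)
    (hξbdd : ∃ C : ℝ, ∀ s ∈ Set.Icc r0 t, |ξ s| ≤ C)
    (lam lam' : ℝ × ℝ) (hlam : lam ∈ quadrant) (hlam' : lam' ∈ quadrant)
    (hle1 : lam.1 ≤ lam'.1) (hle2 : lam.2 ≤ lam'.2)
    (u u' : ℝ → ℝ × ℝ)
    (hucont : ContinuousOn u (Set.Icc r0 t))
    (hu'cont : ContinuousOn u' (Set.Icc r0 t))
    (huquad : ∀ r ∈ Set.Icc r0 t, u r ∈ quadrant)
    (hu'quad : ∀ r ∈ Set.Icc r0 t, u' r ∈ quadrant)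
    (hueq1 : ∀ r ∈ Set.Icc r0 t,
      (u r).1 = lam.1 - ∫ s in r..t,
        Real.exp (ξ s) * phi1 b c1 m1 (Real.exp (-ξ s) • u s))
    (hueq2 : ∀ r ∈ Set.Icc r0 t,
      (u r).2 = lam.2 - ∫ s in r..t,
        Real.exp (ξ s) * phi2 b c2 m2 (Real.exp (-ξ s) • u s))
    (hu'eq1 : ∀ r ∈ Set.Icc r0 t,
      (u' r).1 = lam'.1 - ∫ s in r..t,
        Real.exp (ξ s) * phi1 b c1 m1 (Real.exp (-ξ s) • u' s))
    (hu'eq2 : ∀ r ∈ Set.Icc r0 t,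
      (u' r).2 = lam'.2 - ∫ s in r..t,
        Real.exp (ξ s) * phi2 b c2 m2 (Real.exp (-ξ s) • u' s)) :
    ∀ r ∈ Set.Icc r0 t, (u r).1 ≤ (u' r).1 ∧ (u r).2 ≤ (u' r).2 :=
  stmt15_general b c1 c2 m1 m2 hsupp1 hsupp2 hmom1 hmom2 hadm1 hadm2 t r0 hr0 ξ hξmeas hξbdd lam
    lam' hle1 hle2 u u' hucont hu'cont huquad hu'quad hueq1 hueq2 hu'eq1 hu'eq2
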